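/- arXiv:1909.01881 — 2 statements merged into one kernel-verified Lean document; each statement's English description precedes it below -/
import Mathlib

section
/- Let w : (0,∞) → ℝ be absolutely continuous with w(r) → 0 as r → 0⁺, and suppose E₁ = ∫₀^R |w'(r)|² dr and E₂ = ∫₀^R |w(r)|^{p+1}/r^{p-1} dr are finite, with w(R) ≠ 0. Then E₂ ≥ c_p |w(R)|^{p+3}/(R^{p-1} E₁) for a constant c_p > 0 depending only on p ≥ 1. -/
open MeasureTheory intervalIntegral

/-- Elementary Cauchy–Schwarz for set integrals on an interval, via AM–GM. -/
lemma sq_setIntegral_le {f : ℝ → ℝ} {a b : ℝ} (hab : a ≤ b)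
    (hf : IntegrableOn f (Set.Ioc a b))
    (hf2 : IntegrableOn (fun r => (f r) ^ 2) (Set.Ioc a b)) :
    (∫ r in Set.Ioc a b, f r) ^ 2 ≤ (b - a) * ∫ r in Set.Ioc a b, (f r) ^ 2 := by
  set A := ∫ r in Set.Ioc a b, |f r| with hA
  set B := ∫ r in Set.Ioc a b, (f r) ^ 2 with hB
  set L := b - a with hL
  have hLnn : 0 ≤ L := by simp [hL]; linarith
  have hvol : (volume (Set.Ioc a b)).toReal = L := by
    simp [Real.volume_Ioc, ENNReal.toReal_ofReal (show 0 ≤ b - a by linarith), hL]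
  have hAnn : 0 ≤ A := setIntegral_nonneg measurableSet_Ioc (fun x _ => abs_nonneg _)
  have hBnn : 0 ≤ B := setIntegral_nonneg measurableSet_Ioc (fun x _ => sq_nonneg _)
  have habs : |∫ r in Set.Ioc a b, f r| ≤ A := by
    simpa using norm_integral_le_integral_norm (μ := volume.restrict (Set.Ioc a b)) f
  have hstep : (∫ r in Set.Ioc a b, f r) ^ 2 ≤ A ^ 2 := by
    have := sq_abs (∫ r in Set.Ioc a b, f r)
    nlinarith [abs_nonneg (∫ r in Set.Ioc a b, f r)]
  refine hstep.trans ?_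
  have key : ∀ t : ℝ, 0 < t → 2 * A ≤ t * B + L / t := by
    intro t ht
    have hmono : A ≤ ∫ r in Set.Ioc a b, (t * (f r) ^ 2 + 1 / t) / 2 := by
      refine setIntegral_mono_on hf.abs ?_ measurableSet_Ioc ?_
      · exact (((hf2.const_mul t).add (integrableOn_const measure_Ioc_lt_top.ne)).div_const 2)
      · intro x _
        have h1 : 0 ≤ (Real.sqrt t * |f x| - 1 / Real.sqrt t) ^ 2 := sq_nonneg _
        have hst : Real.sqrt t ^ 2 = t := Real.sq_sqrt ht.le
        have hstpos : 0 < Real.sqrt t := Real.sqrt_pos.2 ht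
        have hsa := sq_abs (f x)
        have hmul : Real.sqrt t * |f x| * (1 / Real.sqrt t) = |f x| := by
          field_simp
        have h3 : (Real.sqrt t * |f x|) ^ 2 = t * f x ^ 2 := by
          rw [mul_pow, hst, hsa]
        have h4 : (1 / Real.sqrt t) ^ 2 = 1 / t := by
          rw [div_pow, one_pow, hst]
        nlinarith [h1, h3, h4, hmul]
    have hcalc : ∫ r in Set.Ioc a b, (t * (f r) ^ 2 + 1 / t) / 2
        = (t * B + L / t) / 2 := by
      rw [MeasureTheory.integral_div, MeasureTheory.integral_add (hf2.const_mul t)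
        (integrableOn_const measure_Ioc_lt_top.ne),
        MeasureTheory.integral_const_mul, setIntegral_const, measureReal_def, hvol, smul_eq_mul]
      ring
    rw [hcalc] at hmono
    linarith
  rcases eq_or_lt_of_le hAnn with hA0 | hApos
  · nlinarith
  rcases eq_or_lt_of_le hBnn with hB0 | hBpos
  · exfalso
    rcases eq_or_lt_of_le hLnn with hL0 | hLpos
    · have := key 1 one_pos
      rw [← hB0, ← hL0] at this
      simp at this; linarith
    · have hk := key (L / A) (div_pos hLpos hApos)
      rw [← hB0] at hk
      have : L / (L / A) = A := by field_simp
      rw [this] at hk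
      linarith
  · have hk := key (A / B) (div_pos hApos hBpos)
    have h1 : A / B * B = A := div_mul_cancel₀ _ hBpos.ne'
    have h2 : L / (A / B) = L * B / A := div_div_eq_mul_div _ _ _
    rw [h1, h2] at hk
    have : A ≤ L * B / A := by linarith
    rw [le_div_iff₀ hApos] at this
    nlinarith [this]

/-- Lower bound for the potential-type integral:
`E₂ ≥ c_p |w(R)|^{p+3} / (R^{p-1} E₁)`. -/
theorem potential_lower_bound (p : ℝ) (hp : 1 ≤ p) :
    ∃ c : ℝ, 0 < c ∧
      ∀ (w : ℝ → ℝ) (R : ℝ), 0 < R →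
        Filter.Tendsto w (nhdsWithin 0 (Set.Ioi 0)) (nhds 0) →
        (∀ r ∈ Set.Ioc (0:ℝ) R, DifferentiableAt ℝ w r) →
        (∀ a b : ℝ, 0 < a → a ≤ b → b ≤ R →
          w b - w a = ∫ r in a..b, deriv w r) →
        IntegrableOn (fun r => (deriv w r) ^ 2) (Set.Ioc 0 R) →
        IntegrableOn (fun r => |w r| ^ (p + 1) / r ^ (p - 1)) (Set.Ioc 0 R) →
        w R ≠ 0 →
        (∫ r in Set.Ioc (0:ℝ) R, |w r| ^ (p + 1) / r ^ (p - 1)) ≥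
          c * |w R| ^ (p + 3) /
            (R ^ (p - 1) * ∫ r in Set.Ioc (0:ℝ) R, (deriv w r) ^ 2) := by
  refine ⟨1 / 2 ^ (p + 3 : ℝ), by positivity, ?_⟩
  intro w R hR hw0 _hdiff hftc hI2 hIg hwR
  set E₁ : ℝ := ∫ r in Set.Ioc (0:ℝ) R, (deriv w r) ^ 2 with hE₁def
  have hE₁nn : 0 ≤ E₁ := setIntegral_nonneg measurableSet_Ioc (fun x _ => sq_nonneg _)
  have hmeas : Measurable (deriv w) := measurable_deriv w
  have hIf : IntegrableOn (deriv w) (Set.Ioc 0 R) := by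
    have hb : IntegrableOn (fun r => (deriv w r) ^ 2 + 1) (Set.Ioc 0 R) :=
      hI2.add (integrableOn_const measure_Ioc_lt_top.ne)
    refine hb.mono' hmeas.aestronglyMeasurable (ae_of_all _ fun x => ?_)
    simp only [Real.norm_eq_abs]
    nlinarith [sq_nonneg (|deriv w x| - 1), sq_abs (deriv w x), abs_nonneg (deriv w x)]
  have key : ∀ a : ℝ, 0 < a → a ≤ R → (w R - w a) ^ 2 ≤ (R - a) * E₁ := by
    intro a ha haR
    have heq : w R - w a = ∫ r in Set.Ioc a R, deriv w r := by
      rw [hftc a R ha haR le_rfl, intervalIntegral.integral_of_le haR]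
    have hsub : Set.Ioc a R ⊆ Set.Ioc 0 R := Set.Ioc_subset_Ioc_left ha.le
    have h1 := sq_setIntegral_le haR (hIf.mono_set hsub) (hI2.mono_set hsub)
    rw [← heq] at h1
    refine h1.trans (mul_le_mul_of_nonneg_left ?_ (by linarith))
    exact setIntegral_mono_set hI2 (ae_of_all _ fun x => sq_nonneg _)
      (HasSubset.Subset.eventuallyLE hsub)
  have hwR2 : (w R) ^ 2 ≤ R * E₁ := by
    have hlim : Filter.Tendsto (fun a => (w R - w a) ^ 2)
        (nhdsWithin 0 (Set.Ioi 0)) (nhds ((w R) ^ 2)) := by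
      have h := ((tendsto_const_nhds (x := w R)
        (f := nhdsWithin (0:ℝ) (Set.Ioi 0))).sub hw0).pow 2
      simpa using h
    refine le_of_tendsto hlim ?_
    filter_upwards [Ioo_mem_nhdsGT_of_mem (Set.left_mem_Ico.2 hR)] with a ha
    have h := key a ha.1 ha.2.le
    nlinarith [ha.1, hE₁nn]
  have hwRsq : 0 < (w R) ^ 2 := by positivity
  have hE₁pos : 0 < E₁ := by nlinarith
  set δ : ℝ := (w R) ^ 2 / (4 * E₁) with hδdef
  have hδpos : 0 < δ := by positivity
  have hδle : δ ≤ R / 4 := by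
    rw [hδdef, div_le_div_iff₀ (by positivity) (by norm_num)]
    nlinarith
  set a : ℝ := R - δ with hadef
  have ha0 : 0 < a := by rw [hadef]; linarith
  have haR : a ≤ R := by rw [hadef]; linarith
  have hsub : Set.Ioc a R ⊆ Set.Ioc 0 R := Set.Ioc_subset_Ioc_left ha0.le
  have hlow : ∀ r ∈ Set.Ioc a R, |w R| / 2 ≤ |w r| := by
    intro r hr
    have h1 := key r (ha0.trans hr.1) hr.2
    have h2 : (w R - w r) ^ 2 ≤ (w R) ^ 2 / 4 := by
      have hRr : R - r ≤ δ := by rw [hadef] at hr; linarith [hr.1]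
      have : (R - r) * E₁ ≤ δ * E₁ := mul_le_mul_of_nonneg_right hRr hE₁pos.le
      have hδE : δ * E₁ = (w R) ^ 2 / 4 := by
        rw [hδdef]; field_simp
      linarith
    have h4 := abs_sub_abs_le_abs_sub (w R) (w r)
    nlinarith [sq_abs (w R - w r), abs_nonneg (w R - w r), sq_abs (w R),
      abs_nonneg (w r), abs_nonneg (w R)]
  set C : ℝ := (|w R| / 2) ^ (p + 1) / R ^ (p - 1) with hCdef
  have hstepA : (∫ r in Set.Ioc a R, |w r| ^ (p + 1) / r ^ (p - 1))
      ≤ ∫ r in Set.Ioc (0:ℝ) R, |w r| ^ (p + 1) / r ^ (p - 1) := by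
    refine setIntegral_mono_set hIg ?_ (HasSubset.Subset.eventuallyLE hsub)
    refine (ae_restrict_iff' measurableSet_Ioc).2 (ae_of_all _ fun x hx => ?_)
    have hx0 : (0:ℝ) < x := hx.1
    positivity
  have hstepB : (∫ _r in Set.Ioc a R, C) ≤ ∫ r in Set.Ioc a R, |w r| ^ (p + 1) / r ^ (p - 1) := by
    refine setIntegral_mono_on (integrableOn_const measure_Ioc_lt_top.ne)
      (hIg.mono_set hsub) measurableSet_Ioc fun x hx => ?_
    have hx0 : (0:ℝ) < x := ha0.trans hx.1
    rw [hCdef]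
    refine div_le_div₀ (by positivity) ?_ (by positivity) ?_
    · exact Real.rpow_le_rpow (by positivity) (hlow x hx) (by linarith)
    · exact Real.rpow_le_rpow hx0.le hx.2 (by linarith)
  have hstepC : (∫ _r in Set.Ioc a R, C) = δ * C := by
    rw [setIntegral_const, measureReal_def, Real.volume_Ioc, ENNReal.toReal_ofReal (by linarith), smul_eq_mul]
    rw [hadef]; ring
  have halg : δ * C = (1 / 2 ^ (p + 3 : ℝ)) * |w R| ^ (p + 3) / (R ^ (p - 1) * E₁) := by
    have e1 : (|w R| / 2) ^ (p + 1) = |w R| ^ (p + 1) / 2 ^ (p + 1) :=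
      Real.div_rpow (abs_nonneg _) (by norm_num) _
    have e4 : (w R) ^ 2 = |w R| ^ (2 : ℝ) := by
      rw [← sq_abs, ← Real.rpow_natCast |w R| 2]; norm_num
    have e2 : |w R| ^ (p + 1) * |w R| ^ (2 : ℝ) = |w R| ^ (p + 3) := by
      rw [← Real.rpow_add (abs_pos.2 hwR)]; congr 1; ring
    have e3 : (2:ℝ) ^ (p + 1) * 4 = 2 ^ (p + 3 : ℝ) := by
      have : (4:ℝ) = 2 ^ (2:ℝ) := by
        rw [show (2:ℝ) = ((2:ℕ):ℝ) by norm_num, Real.rpow_natCast]; norm_num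
      rw [this, ← Real.rpow_add two_pos]; congr 1; ring
    have h2p1 : (0:ℝ) < 2 ^ (p + 1 : ℝ) := by positivity
    have hRp : (0:ℝ) < R ^ (p - 1 : ℝ) := by positivity
    rw [hδdef, hCdef, e1, e4, ← e2, ← e3]
    field_simp
  rw [ge_iff_le]
  calc (1 / 2 ^ (p + 3 : ℝ)) * |w R| ^ (p + 3) / (R ^ (p - 1) * E₁)
      = δ * C := halg.symm
    _ = ∫ _r in Set.Ioc a R, C := hstepC.symm
    _ ≤ ∫ r in Set.Ioc a R, |w r| ^ (p + 1) / r ^ (p - 1) := hstepB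
    _ ≤ _ := hstepA
end

section
/- Let p > 3, β = 1 − 2/(p−1), and R > 0. Suppose w : {(r,t) : r > 0} → ℝ is a continuous solution of ∂_t² w − ∂_r² w = −|w|^{p−1} w / r^{p−1} with w(0⁺, t) = 0, satisfying the d'Alembert representation, and whose initial data obey |w(r,0)| ≤ c r^β for r ≥ R and |∫_{r₁}^{r₂} w_t(r,0) dr| ≤ c (r₂ − r₁)^β for R ≤ r₁ < r₂. Then there exists c(p) > 0 such that if c < c(p), then |w(r,t)| < 3c r^β for all (r,t) with r ≥ |t| + R. -/
open MeasureTheory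

/-- The triangular region `Ω(r,t)` for the d'Alembert representation. -/
def dAlembertRegion (r t : ℝ) : Set (ℝ × ℝ) :=
  {z : ℝ × ℝ | z.1 + z.2 < r + t ∧ z.2 - z.1 < t - r ∧ 0 < z.2}

lemma dAlembertRegion_measurable (r t : ℝ) : MeasurableSet (dAlembertRegion r t) := by
  have h1 : IsOpen {z : ℝ × ℝ | z.1 + z.2 < r + t} :=
    isOpen_lt (continuous_fst.add continuous_snd) continuous_const
  have h2 : IsOpen {z : ℝ × ℝ | z.2 - z.1 < t - r} :=
    isOpen_lt (continuous_snd.sub continuous_fst) continuous_const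
  have h3 : IsOpen {z : ℝ × ℝ | 0 < z.2} := isOpen_lt continuous_const continuous_snd
  unfold dAlembertRegion
  simp only [Set.setOf_and]
  exact (h1.inter (h2.inter h3)).measurableSet

lemma dAlembert_int_bound {α M r t : ℝ} (hα1 : (-2:ℝ) < α) (hα2 : α < -1) (hM : 0 ≤ M)
    (ht : 0 < t) (htr : t < r) {f : ℝ × ℝ → ℝ}
    (hmeas : AEStronglyMeasurable f (volume.restrict (dAlembertRegion r t)))
    (hbound : ∀ z ∈ dAlembertRegion r t, |f z| ≤ M * z.1 ^ α) :
    |∫ z in dAlembertRegion r t, f z| ≤ M * (2 * r) ^ (α + 2) / (α + 2) := by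
  have hapos : 0 < r - t := by linarith
  set T : Set (ℝ × ℝ) := {z : ℝ × ℝ | z.1 ∈ Set.Ioo (r-t) (r + t) ∧ z.2 ∈ Set.Ioo 0 (z.1 - (r-t))}
    with hT
  have hToT : dAlembertRegion r t ⊆ T := by
    rintro ⟨x, y⟩ ⟨h1, h2, h3⟩
    refine ⟨⟨by linarith, by linarith⟩, h3, by simp only []; linarith⟩
  have hTmeas : MeasurableSet T := by
    have h1 : IsOpen {z : ℝ × ℝ | r - t < z.1} := isOpen_lt continuous_const continuous_fst
    have h2 : IsOpen {z : ℝ × ℝ | z.1 < r + t} := isOpen_lt continuous_fst continuous_const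
    have h3 : IsOpen {z : ℝ × ℝ | 0 < z.2} := isOpen_lt continuous_const continuous_snd
    have h4 : IsOpen {z : ℝ × ℝ | z.2 < z.1 - (r - t)} :=
      isOpen_lt continuous_snd (continuous_fst.sub continuous_const)
    simp only [hT, Set.mem_Ioo, Set.setOf_and]
    exact ((h1.inter h2).inter (h3.inter h4)).measurableSet
  -- the dominating function
  set g : ℝ × ℝ → ℝ := fun z => M * z.1 ^ α with hg
  have hgmeas : Measurable g := by
    exact (measurable_const.mul (measurable_fst.pow measurable_const))
  have hgnonnegT : ∀ z ∈ T, 0 ≤ g z := by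
    rintro ⟨x, y⟩ ⟨⟨hx1, hx2⟩, hy⟩
    exact mul_nonneg hM (Real.rpow_nonneg (by linarith) _)
  have hgleT : ∀ z ∈ T, g z ≤ M * (r-t) ^ α := by
    rintro ⟨x, y⟩ ⟨⟨hx1, hx2⟩, hy⟩
    exact mul_le_mul_of_nonneg_left (Real.rpow_le_rpow_of_nonpos hapos hx1.le (by linarith)) hM
  have hTfin : volume T < ⊤ := by
    have hsub : T ⊆ Set.Ioo (r-t) (r+t) ×ˢ Set.Ioo (0:ℝ) (2*t) := by
      rintro ⟨x, y⟩ ⟨⟨hx1, hx2⟩, hy1, hy2⟩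
      exact ⟨⟨hx1, hx2⟩, hy1, by simp only [] at hy2 ⊢; linarith⟩
    refine lt_of_le_of_lt (measure_mono hsub) ?_
    rw [Measure.volume_eq_prod, Measure.prod_prod]
    exact ENNReal.mul_lt_top (by simp) (by rw [Real.volume_Ioo]; exact ENNReal.ofReal_lt_top)
  have hIntT : IntegrableOn g T := by
    refine Integrable.mono' (g := fun _ => M * (r-t) ^ α) (integrableOn_const hTfin.ne) (hgmeas.aestronglyMeasurable.restrict) ?_
    exact (ae_restrict_iff' hTmeas).2 (Filter.Eventually.of_forall fun z hz => by
      rw [Real.norm_eq_abs, abs_of_nonneg (hgnonnegT z hz)]; exact hgleT z hz)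
  have hIntΩ : IntegrableOn g (dAlembertRegion r t) := hIntT.mono_set hToT
  have hfInt : IntegrableOn f (dAlembertRegion r t) := by
    refine Integrable.mono' hIntΩ hmeas ?_
    exact (ae_restrict_iff' (dAlembertRegion_measurable r t)).2
      (Filter.Eventually.of_forall fun z hz => by
        rw [Real.norm_eq_abs]; exact hbound z hz)
  -- Fubini computation over T
  have hInd : Integrable (T.indicator g) (volume.prod volume) := by
    rw [← Measure.volume_eq_prod]
    exact (integrable_indicator_iff hTmeas).2 hIntT
  have hTint : ∫ z in T, g z
      = ∫ x, (Set.Ioo (r-t) (r+t)).indicator (fun x => (x - (r-t)) * (M * x ^ α)) x := by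
    rw [← integral_indicator hTmeas, Measure.volume_eq_prod, integral_prod _ hInd]
    congr 1
    funext x
    by_cases hx : x ∈ Set.Ioo (r-t) (r+t)
    · have hfy : (fun y => T.indicator g (x, y))
          = (Set.Ioo 0 (x - (r-t))).indicator (fun _ => M * x ^ α) := by
        funext y
        by_cases hy : y ∈ Set.Ioo 0 (x - (r-t))
        · rw [Set.indicator_of_mem hy, Set.indicator_of_mem (by exact ⟨hx, hy⟩)]
        · rw [Set.indicator_of_notMem hy, Set.indicator_of_notMem (by
            intro hmem; exact hy hmem.2)]
      rw [hfy, Set.indicator_of_mem hx, integral_indicator measurableSet_Ioo,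
        setIntegral_const, Real.volume_real_Ioo, smul_eq_mul, sub_zero,
        max_eq_left (by simp only [Set.mem_Ioo] at hx; linarith)]
    · have hfy : (fun y => T.indicator g (x, y)) = fun _ => (0:ℝ) := by
        funext y
        exact Set.indicator_of_notMem (fun hmem => hx hmem.1) _
      rw [hfy, Set.indicator_of_notMem hx, integral_const, smul_eq_mul, mul_zero]
  have hmono : ∫ x in Set.Ioo (r-t) (r+t), (x - (r-t)) * (M * x ^ α)
      ≤ ∫ x in Set.Ioo (r-t) (r+t), M * x ^ (α+1) := by
    have hIooFin : volume (Set.Ioo (r-t) (r+t)) < ⊤ := by simp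
    refine setIntegral_mono_on ?_ ?_ measurableSet_Ioo ?_
    · refine Integrable.mono' (g := fun _ => (2*t) * (M * (r-t) ^ α))
        (integrableOn_const hIooFin.ne)
        (((measurable_id.sub measurable_const).mul
          (measurable_const.mul (measurable_id.pow measurable_const))).aestronglyMeasurable.restrict) ?_
      refine (ae_restrict_iff' measurableSet_Ioo).2 (Filter.Eventually.of_forall fun x hx => ?_)
      simp only [Set.mem_Ioo] at hx
      rw [Real.norm_eq_abs, abs_of_nonneg (mul_nonneg (by linarith)
        (mul_nonneg hM (Real.rpow_nonneg (by linarith) _)))]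
      refine mul_le_mul (by linarith) (mul_le_mul_of_nonneg_left
        (Real.rpow_le_rpow_of_nonpos hapos hx.1.le (by linarith)) hM)
        (mul_nonneg hM (Real.rpow_nonneg (by linarith) _)) (by linarith)
    · refine Integrable.mono' (g := fun _ => M * (r-t) ^ (α+1))
        (integrableOn_const hIooFin.ne)
        ((measurable_const.mul (measurable_id.pow measurable_const)).aestronglyMeasurable.restrict) ?_
      refine (ae_restrict_iff' measurableSet_Ioo).2 (Filter.Eventually.of_forall fun x hx => ?_)
      simp only [Set.mem_Ioo] at hx
      rw [Real.norm_eq_abs, abs_of_nonneg (mul_nonneg hM (Real.rpow_nonneg (by linarith) _))]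
      exact mul_le_mul_of_nonneg_left
        (Real.rpow_le_rpow_of_nonpos hapos hx.1.le (by linarith)) hM
    · intro x hx
      simp only [Set.mem_Ioo] at hx
      have hxpos : 0 < x := by linarith
      rw [Real.rpow_add_one hxpos.ne']
      have h1 : (0:ℝ) ≤ x ^ α := Real.rpow_nonneg hxpos.le _
      nlinarith [mul_nonneg (mul_nonneg hM h1) hapos.le]
  have hval : ∫ x in Set.Ioo (r-t) (r+t), M * x ^ (α+1)
      = M * (((r+t) ^ (α+2) - (r-t) ^ (α+2)) / (α+2)) := by
    rw [← MeasureTheory.integral_Ioc_eq_integral_Ioo,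
      ← intervalIntegral.integral_of_le (by linarith : r - t ≤ r + t),
      intervalIntegral.integral_const_mul, integral_rpow (Or.inl (by linarith)),
      show α + 1 + 1 = α + 2 by ring]
  have key : ∫ z in T, g z ≤ M * (2 * r) ^ (α + 2) / (α + 2) := by
    rw [hTint, integral_indicator measurableSet_Ioo]
    refine le_trans hmono ?_
    rw [hval]
    have h2r : ((r+t):ℝ) ^ (α+2) ≤ (2*r) ^ (α+2) :=
      Real.rpow_le_rpow (by linarith) (by linarith) (by linarith)
    have hge : (0:ℝ) ≤ (r-t) ^ (α+2) := Real.rpow_nonneg (by linarith) _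
    rw [mul_div_assoc]
    refine mul_le_mul_of_nonneg_left ?_ hM
    exact (div_le_div_iff_of_pos_right (by linarith : (0:ℝ) < α + 2)).2 (by linarith)
  calc |∫ z in dAlembertRegion r t, f z|
      ≤ ∫ z in dAlembertRegion r t, g z := by
        rw [← Real.norm_eq_abs]
        refine norm_integral_le_of_norm_le hIntΩ ?_
        exact (ae_restrict_iff' (dAlembertRegion_measurable r t)).2
          (Filter.Eventually.of_forall fun z hz => by
            rw [Real.norm_eq_abs]; exact hbound z hz)
    _ ≤ ∫ z in T, g z := setIntegral_mono_set hIntT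
        ((ae_restrict_iff' hTmeas).2 (Filter.Eventually.of_forall hgnonnegT))
        (HasSubset.Subset.eventuallyLE hToT)
    _ ≤ M * (2 * r) ^ (α + 2) / (α + 2) := key

set_option maxHeartbeats 1000000 in
lemma dAlembert_core (p : ℝ) (hp : 3 < p) (R c : ℝ) (hR : 0 < R) (hc : 0 < c)
    (hcsmall : 3 ^ p * c ^ (p - 1) ≤ (1 - 2 / (p - 1)) / 8)
    (v : ℝ → ℝ → ℝ) (u : ℝ → ℝ)
    (hcont : ContinuousOn (fun z : ℝ × ℝ => v z.1 z.2) {z : ℝ × ℝ | 0 < z.1})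
    (hrep : ∀ r t : ℝ, 0 ≤ t → t < r →
      v r t = (v (r - t) 0 + v (r + t) 0) / 2
        + (∫ s in (r - t)..(r + t), u s) / 2
        - (∫ z in dAlembertRegion r t,
            |v z.1 z.2| ^ (p - 1) * v z.1 z.2 / z.1 ^ (p - 1)) / 2)
    (hdata : ∀ r : ℝ, R ≤ r → |v r 0| ≤ c * r ^ (1 - 2 / (p - 1)))
    (hdata' : ∀ r₁ r₂ : ℝ, R ≤ r₁ → r₁ < r₂ →
      |∫ s in r₁..r₂, u s| ≤ c * (r₂ - r₁) ^ (1 - 2 / (p - 1))) :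
    ∀ r₀ t₀ : ℝ, 0 ≤ t₀ → t₀ + R ≤ r₀ → |v r₀ t₀| < 3 * c * r₀ ^ (1 - 2 / (p - 1)) := by
  intro r₀ t₀ ht₀ hrt₀
  have hp1 : (0:ℝ) < p - 1 := by linarith
  set β : ℝ := 1 - 2 / (p - 1) with hβ
  have hfrac : 0 < 2 / (p - 1) ∧ 2 / (p - 1) < 1 :=
    ⟨by positivity, (div_lt_one hp1).2 (by linarith)⟩
  have hβpos : 0 < β := by rw [hβ]; linarith [hfrac.2]
  have hβle1 : β ≤ 1 := by rw [hβ]; linarith [hfrac.1]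
  -- the compact backward region
  set K : Set (ℝ × ℝ) := {z : ℝ × ℝ | 0 ≤ z.2 ∧ z.2 + R ≤ z.1 ∧
    z.1 + z.2 ≤ r₀ + t₀ ∧ z.2 - z.1 ≤ t₀ - r₀} with hKdef
  have hKpos : ∀ z ∈ K, 0 < z.1 := fun z hz => by
    have h1 : 0 ≤ z.2 := hz.1; have h2 : z.2 + R ≤ z.1 := hz.2.1; linarith
  have hKsubpos : K ⊆ {z : ℝ × ℝ | 0 < z.1} := fun z hz => hKpos z hz
  have hKcl : IsClosed K := by
    have h1 : IsClosed {z : ℝ × ℝ | 0 ≤ z.2} := isClosed_le continuous_const continuous_snd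
    have h2 : IsClosed {z : ℝ × ℝ | z.2 + R ≤ z.1} :=
      isClosed_le (continuous_snd.add continuous_const) continuous_fst
    have h3 : IsClosed {z : ℝ × ℝ | z.1 + z.2 ≤ r₀ + t₀} :=
      isClosed_le (continuous_fst.add continuous_snd) continuous_const
    have h4 : IsClosed {z : ℝ × ℝ | z.2 - z.1 ≤ t₀ - r₀} :=
      isClosed_le (continuous_snd.sub continuous_fst) continuous_const
    rw [hKdef]; simp only [Set.setOf_and]
    exact h1.inter (h2.inter (h3.inter h4))
  have hKcomp : IsCompact K := by
    refine IsCompact.of_isClosed_subset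
      (isCompact_Icc : IsCompact (Set.Icc ((0:ℝ), (0:ℝ)) (r₀ + t₀, r₀ + t₀))) hKcl ?_
    rintro ⟨x, y⟩ ⟨h1, h2, h3, h4⟩
    simp only [] at h1 h2 h3 h4
    constructor <;> constructor <;> simp only [] <;> linarith
  -- the bad set
  set C : Set (ℝ × ℝ) := {z ∈ K | 11/4 * c * z.1 ^ β ≤ |v z.1 z.2|} with hCdef
  have hCcl : IsClosed C := by
    have hf : ContinuousOn (fun z : ℝ × ℝ => |v z.1 z.2| - 11/4 * c * z.1 ^ β) K := by
      refine ContinuousOn.sub (hcont.mono hKsubpos).abs ?_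
      exact continuousOn_const.mul
        ((continuous_fst.continuousOn).rpow_const fun z hz => Or.inr hβpos.le)
    have : C = K ∩ (fun z : ℝ × ℝ => |v z.1 z.2| - 11/4 * c * z.1 ^ β) ⁻¹' Set.Ici 0 := by
      ext z
      simp only [hCdef, Set.mem_sep_iff, Set.mem_inter_iff, Set.mem_preimage, Set.mem_Ici]
      exact and_congr_right fun _ => by constructor <;> intro h <;> linarith
    rw [this]
    exact hf.preimage_isClosed_of_isClosed hKcl isClosed_Ici
  have hCsub : C ⊆ K := fun z hz => hz.1
  have hCcomp : IsCompact C := IsCompact.of_isClosed_subset hKcomp hCcl hCsub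
  -- the bad set is empty
  have hCempty : C = ∅ := by
    by_contra hne
    obtain ⟨z₁, hz₁C, hz₁min⟩ := hCcomp.exists_isMinOn
      (Set.nonempty_iff_ne_empty.2 hne) (continuous_snd.continuousOn)
    obtain ⟨hz₁K, hbad⟩ := hz₁C
    obtain ⟨ht₁0, hr₁R, hsum, hdiff⟩ := hz₁K
    set r₁ : ℝ := z₁.1 with hr₁def
    set t₁ : ℝ := z₁.2 with ht₁def

    have hr₁pos : 0 < r₁ := by linarith
    have ht₁r : t₁ < r₁ := by linarith
    have hr₁βpos : 0 < c * r₁ ^ β := mul_pos hc (Real.rpow_pos_of_pos hr₁pos β)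
    have ht₁pos : 0 < t₁ := by
      rcases eq_or_lt_of_le ht₁0 with h | h
      · exfalso
        have hd := hdata r₁ (by linarith)
        rw [← h] at hbad
        nlinarith
      · exact h
    -- points strictly below t₁ are good
    have hgood : ∀ z ∈ K, z.2 < t₁ → |v z.1 z.2| < 11/4 * c * z.1 ^ β := by
      intro z hzK hzlt
      by_contra hge
      push_neg at hge
      exact absurd (isMinOn_iff.1 hz₁min z ⟨hzK, hge⟩) (not_le.2 hzlt)
    -- the region of integration lies below t₁ inside K
    have hΩK : ∀ z ∈ dAlembertRegion r₁ t₁, z ∈ K ∧ z.2 < t₁ := by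
      rintro ⟨x, y⟩ ⟨h1, h2, h3⟩
      simp only [] at h1 h2 h3
      exact ⟨⟨by linarith, by linarith, by linarith, by linarith⟩, by linarith⟩
    have habs3 : ∀ z ∈ dAlembertRegion r₁ t₁, |v z.1 z.2| ≤ 3 * c * z.1 ^ β := by
      intro z hz
      have h1 := hgood z (hΩK z hz).1 (hΩK z hz).2
      have h2 : (0:ℝ) ≤ c * z.1 ^ β :=
        mul_nonneg hc.le (Real.rpow_nonneg (hKpos z (hΩK z hz).1).le β)
      nlinarith
    -- the nonlinear term
    set α : ℝ := 1 - 2 * p / (p - 1) with hαdef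
    have h2p : 2 * p / (p - 1) = 2 + 2 / (p - 1) := by field_simp; ring
    have hα1 : (-2:ℝ) < α := by rw [hαdef, h2p]; linarith [hfrac.2]
    have hα2 : α < -1 := by rw [hαdef, h2p]; linarith [hfrac.1]
    have hαβ : α + 2 = β := by rw [hαdef, hβ, h2p]; ring
    set M : ℝ := 3 ^ p * c ^ p with hMdef
    have hM0 : (0:ℝ) ≤ M := by positivity
    set f : ℝ × ℝ → ℝ := fun z => |v z.1 z.2| ^ (p - 1) * v z.1 z.2 / z.1 ^ (p - 1)
      with hfdef
    have hΩsub : dAlembertRegion r₁ t₁ ⊆ {z : ℝ × ℝ | 0 < z.1} :=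
      fun z hz => hKpos z (hΩK z hz).1
    have hmeasf : AEStronglyMeasurable f (volume.restrict (dAlembertRegion r₁ t₁)) := by
      have hcontf : ContinuousOn f {z : ℝ × ℝ | 0 < z.1} := by
        refine ContinuousOn.div (ContinuousOn.mul ?_ hcont)
          ((continuous_fst.continuousOn).rpow_const fun z hz => Or.inr (by linarith)) ?_
        · exact hcont.abs.rpow_const fun z hz => Or.inr (by linarith)
        · exact fun z hz => (Real.rpow_pos_of_pos hz (p - 1)).ne'
      exact (hcontf.mono hΩsub).aestronglyMeasurable (dAlembertRegion_measurable r₁ t₁)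
    have hfb : ∀ z ∈ dAlembertRegion r₁ t₁, |f z| ≤ M * z.1 ^ α := by
      intro z hz
      have hz1 : 0 < z.1 := hΩsub hz
      have hv3 := habs3 z hz
      have hpow : |v z.1 z.2| ^ (p - 1) * |v z.1 z.2| = |v z.1 z.2| ^ p := by
        have h := Real.rpow_add' (abs_nonneg (v z.1 z.2)) (y := p - 1) (z := 1)
          (by rw [(by ring : p - 1 + 1 = p)]; exact (by linarith : (0:ℝ) < p).ne')
        rw [(by ring : p - 1 + 1 = p), Real.rpow_one] at h
        exact h.symm
      have habs_f : |f z| = |v z.1 z.2| ^ p / z.1 ^ (p - 1) := by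
        rw [hfdef]
        rw [abs_div, abs_mul, abs_of_nonneg (Real.rpow_nonneg (abs_nonneg _) (p - 1)),
          hpow, abs_of_nonneg (Real.rpow_nonneg hz1.le (p - 1))]
      rw [habs_f]
      have hnum : |v z.1 z.2| ^ p ≤ (3 * c * z.1 ^ β) ^ p :=
        Real.rpow_le_rpow (abs_nonneg _) hv3 (by linarith)
      have hden : 0 < z.1 ^ (p - 1) := Real.rpow_pos_of_pos hz1 _
      have hzz : z.1 ^ (β * p) / z.1 ^ (p - 1) = z.1 ^ α := by
        rw [← Real.rpow_sub hz1,
          show β * p - (p - 1) = α by rw [hβ, hαdef]; field_simp; ring]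
      have hexp : (3 * c * z.1 ^ β) ^ p / z.1 ^ (p - 1) = M * z.1 ^ α := by
        calc (3 * c * z.1 ^ β) ^ p / z.1 ^ (p - 1)
            = (3 ^ p * c ^ p) * (z.1 ^ (β * p) / z.1 ^ (p - 1)) := by
              rw [Real.mul_rpow (by positivity) (Real.rpow_nonneg hz1.le β),
                Real.mul_rpow (by norm_num) hc.le, ← Real.rpow_mul hz1.le]
              ring
          _ = M * z.1 ^ α := by rw [hzz]
      rw [← hexp]
      exact (div_le_div_iff_of_pos_right hden).2 hnum
    -- apply the integral bound
    have hint := dAlembert_int_bound hα1 hα2 hM0 ht₁pos ht₁r hmeasf hfb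
    rw [hαβ] at hint
    have h2rβ : (2 * r₁) ^ β ≤ 2 * r₁ ^ β := by
      rw [Real.mul_rpow (by norm_num) hr₁pos.le]
      refine mul_le_mul_of_nonneg_right ?_ (Real.rpow_nonneg hr₁pos.le β)
      calc (2:ℝ) ^ β ≤ (2:ℝ) ^ (1:ℝ) := Real.rpow_le_rpow_of_exponent_le one_le_two hβle1
        _ = 2 := Real.rpow_one 2
    have hMc : M ≤ β * c / 8 := by
      have h1 : c ^ p = c ^ (p - 1) * c := by
        have h := Real.rpow_add' hc.le (y := p - 1) (z := 1)
          (by rw [(by ring : p - 1 + 1 = p)]; exact (by linarith : (0:ℝ) < p).ne')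
        rw [(by ring : p - 1 + 1 = p), Real.rpow_one] at h
        exact h
      calc M = (3 ^ p * c ^ (p - 1)) * c := by rw [hMdef, h1]; ring
        _ ≤ (β / 8) * c := mul_le_mul_of_nonneg_right hcsmall hc.le
        _ = β * c / 8 := by ring
    have hIb : |∫ z in dAlembertRegion r₁ t₁, f z| ≤ c * r₁ ^ β / 4 := by
      refine hint.trans ?_
      have hnum : M * (2 * r₁) ^ β ≤ (β * c / 8) * (2 * r₁ ^ β) :=
        mul_le_mul hMc h2rβ (Real.rpow_nonneg (by positivity) β) (by positivity)
      calc M * (2 * r₁) ^ β / β ≤ ((β * c / 8) * (2 * r₁ ^ β)) / β :=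
            (div_le_div_iff_of_pos_right hβpos).2 hnum
        _ = c * r₁ ^ β / 4 := by field_simp; ring
    -- data bounds
    have hd1 : |v (r₁ - t₁) 0| ≤ c * r₁ ^ β := by
      refine (hdata (r₁ - t₁) (by linarith)).trans ?_
      exact mul_le_mul_of_nonneg_left
        (Real.rpow_le_rpow (by linarith) (by linarith) hβpos.le) hc.le
    have hd2 : |v (r₁ + t₁) 0| ≤ 2 * (c * r₁ ^ β) := by
      refine (hdata (r₁ + t₁) (by linarith)).trans ?_
      calc c * (r₁ + t₁) ^ β ≤ c * (2 * r₁) ^ β :=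
            mul_le_mul_of_nonneg_left
              (Real.rpow_le_rpow (by linarith) (by linarith) hβpos.le) hc.le
        _ ≤ c * (2 * r₁ ^ β) := mul_le_mul_of_nonneg_left h2rβ hc.le
        _ = 2 * (c * r₁ ^ β) := by ring
    have hd3 : |∫ s in (r₁ - t₁)..(r₁ + t₁), u s| ≤ 2 * (c * r₁ ^ β) := by
      refine (hdata' (r₁ - t₁) (r₁ + t₁) (by linarith) (by linarith)).trans ?_
      rw [show r₁ + t₁ - (r₁ - t₁) = 2 * t₁ by ring]
      calc c * (2 * t₁) ^ β ≤ c * (2 * r₁) ^ β :=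
            mul_le_mul_of_nonneg_left
              (Real.rpow_le_rpow (by linarith) (by linarith) hβpos.le) hc.le
        _ ≤ c * (2 * r₁ ^ β) := mul_le_mul_of_nonneg_left h2rβ hc.le
        _ = 2 * (c * r₁ ^ β) := by ring
    -- the representation gives a contradiction
    have hrepv := hrep r₁ t₁ ht₁0 ht₁r
    have htot : |v r₁ t₁| ≤ 21/8 * (c * r₁ ^ β) := by
      rw [hrepv]
      have e2 : ∀ x y z : ℝ, |x / 2 + y / 2 - z / 2| ≤ |x| / 2 + |y| / 2 + |z| / 2 := by
        intro x y z
        calc |x / 2 + y / 2 - z / 2| ≤ |x / 2 + y / 2| + |z / 2| := abs_sub _ _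
          _ ≤ |x / 2| + |y / 2| + |z / 2| := add_le_add_left (abs_add_le _ _) _
          _ = |x| / 2 + |y| / 2 + |z| / 2 := by
              rw [abs_div, abs_div, abs_div]; norm_num
      refine (e2 _ _ _).trans ?_
      have e1 : |v (r₁ - t₁) 0 + v (r₁ + t₁) 0| ≤ |v (r₁ - t₁) 0| + |v (r₁ + t₁) 0| :=
        abs_add_le _ _
      have hIb' := hIb
      rw [hfdef] at hIb'
      linarith [hd1, hd2, hd3, e1, hIb']
    linarith [hbad, htot, hr₁βpos]
  -- conclude
  have hmem : (r₀, t₀) ∈ K := ⟨ht₀, hrt₀, le_rfl, le_rfl⟩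
  have hnot : (r₀, t₀) ∉ C := by rw [hCempty]; exact Set.notMem_empty _
  have hnotbad : ¬ (11/4 * c * r₀ ^ β ≤ |v r₀ t₀|) := fun h => hnot ⟨hmem, h⟩
  push_neg at hnotbad
  have hpos : 0 < c * r₀ ^ β := mul_pos hc (Real.rpow_pos_of_pos (by linarith) β)
  linarith

/-- Bootstrap pointwise bound: a continuous solution of the half-line
semilinear wave equation (via its d'Alembert representation, in both time
directions) with small initial data of size `c r^β` satisfies
`|w(r,t)| < 3 c r^β` for `r ≥ |t| + R`, provided `c` is small. -/
theorem bootstrap_pointwise_bound (p : ℝ) (hp : 3 < p) :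
    ∃ c₀ : ℝ, 0 < c₀ ∧
      ∀ (R c : ℝ) (w : ℝ → ℝ → ℝ) (w₁ : ℝ → ℝ),
        0 < R → 0 < c → c < c₀ →
        ContinuousOn (fun z : ℝ × ℝ => w z.1 z.2) {z : ℝ × ℝ | 0 < z.1} →
        (∀ t : ℝ, Filter.Tendsto (fun r => w r t) (nhdsWithin 0 (Set.Ioi 0)) (nhds 0)) →
        -- d'Alembert representation, forward in time
        (∀ r t : ℝ, 0 ≤ t → t < r →
          w r t = (w (r - t) 0 + w (r + t) 0) / 2
            + (∫ s in (r - t)..(r + t), w₁ s) / 2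
            - (∫ z in dAlembertRegion r t,
                |w z.1 z.2| ^ (p - 1) * w z.1 z.2 / z.1 ^ (p - 1)) / 2) →
        -- d'Alembert representation, backward in time
        (∀ r t : ℝ, 0 ≤ t → t < r →
          w r (-t) = (w (r - t) 0 + w (r + t) 0) / 2
            - (∫ s in (r - t)..(r + t), w₁ s) / 2
            - (∫ z in dAlembertRegion r t,
                |w z.1 (-z.2)| ^ (p - 1) * w z.1 (-z.2) / z.1 ^ (p - 1)) / 2) →
        -- bounds on initial data
        (∀ r : ℝ, R ≤ r → |w r 0| ≤ c * r ^ (1 - 2 / (p - 1))) →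
        (∀ r₁ r₂ : ℝ, R ≤ r₁ → r₁ < r₂ →
          |∫ s in r₁..r₂, w₁ s| ≤ c * (r₂ - r₁) ^ (1 - 2 / (p - 1))) →
        ∀ r t : ℝ, |t| + R ≤ r → |w r t| < 3 * c * r ^ (1 - 2 / (p - 1)) := by
  have hp1 : (0:ℝ) < p - 1 := by linarith
  set β : ℝ := 1 - 2 / (p - 1) with hβ
  have hβpos : 0 < β := by
    have : 2 / (p - 1) < 1 := (div_lt_one hp1).2 (by linarith)
    rw [hβ]; linarith
  refine ⟨(β / 8 / 3 ^ p) ^ (p - 1)⁻¹, Real.rpow_pos_of_pos (by positivity) _, ?_⟩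
  intro R c w w₁ hR hc hcc₀ hcont _hbdry hfwd hbwd hdata hdata' r t hrt
  have hcsmall : 3 ^ p * c ^ (p - 1) ≤ β / 8 := by
    have h3p : (0:ℝ) < 3 ^ p := by positivity
    have h1 : c ^ (p - 1) ≤ ((β / 8 / 3 ^ p) ^ (p - 1)⁻¹) ^ (p - 1) :=
      Real.rpow_le_rpow hc.le hcc₀.le (by linarith)
    rw [← Real.rpow_mul (by positivity), inv_mul_cancel₀ (by linarith : p - 1 ≠ 0),
      Real.rpow_one] at h1
    calc 3 ^ p * c ^ (p - 1) ≤ 3 ^ p * (β / 8 / 3 ^ p) :=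
          mul_le_mul_of_nonneg_left h1 h3p.le
      _ = β / 8 := by field_simp
  rcases le_or_gt 0 t with ht | ht
  · exact dAlembert_core p hp R c hR hc hcsmall w w₁ hcont hfwd hdata hdata' r t ht
      (by rw [abs_of_nonneg ht] at hrt; linarith)
  · set v : ℝ → ℝ → ℝ := fun r s => w r (-s) with hv
    have hcontv : ContinuousOn (fun z : ℝ × ℝ => v z.1 z.2) {z : ℝ × ℝ | 0 < z.1} := by
      have heq : (fun z : ℝ × ℝ => v z.1 z.2)
          = (fun z : ℝ × ℝ => w z.1 z.2) ∘ (fun z : ℝ × ℝ => (z.1, -z.2)) := rfl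
      rw [heq]
      exact hcont.comp ((continuous_fst.prodMk continuous_snd.neg).continuousOn)
        (fun z hz => hz)
    have hrepv : ∀ r t : ℝ, 0 ≤ t → t < r →
        v r t = (v (r - t) 0 + v (r + t) 0) / 2
          + (∫ s in (r - t)..(r + t), (fun s => -w₁ s) s) / 2
          - (∫ z in dAlembertRegion r t,
              |v z.1 z.2| ^ (p - 1) * v z.1 z.2 / z.1 ^ (p - 1)) / 2 := by
      intro r t h0 h1
      have hb := hbwd r t h0 h1
      simp only [hv, neg_zero] at hb ⊢
      rw [intervalIntegral.integral_neg]
      linarith [hb]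
    have hdatav : ∀ r : ℝ, R ≤ r → |v r 0| ≤ c * r ^ β := by
      intro r hr
      simp only [hv, neg_zero]
      exact hdata r hr
    have hdatav' : ∀ r₁ r₂ : ℝ, R ≤ r₁ → r₁ < r₂ →
        |∫ s in r₁..r₂, (fun s => -w₁ s) s| ≤ c * (r₂ - r₁) ^ β := by
      intro r₁ r₂ h1 h2
      simp only []
      rw [intervalIntegral.integral_neg, abs_neg]
      exact hdata' r₁ r₂ h1 h2
    have hfin := dAlembert_core p hp R c hR hc hcsmall v (fun s => -w₁ s)
      hcontv hrepv hdatav hdatav' r (-t) (by linarith)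
      (by rw [abs_of_neg ht] at hrt; linarith)
    simpa [hv] using hfin
end
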